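/- Let λ be a regular uncountable cardinal with λ > 𝔡. Let ⟨A_n : n < ω⟩ be an ⊆-increasing sequence of infinite subsets of ω with union A, and let ⟨f_α : α < λ⟩ be a <*-increasing sequence in A → Ord such that for each n, ⟨f_α ↾ A_n : α < λ⟩ has an exact upper bound of pointwise cofinality λ. Then there is B ⊆ A with A_n ⊆* B for all n such that ⟨f_α ↾ B : α < λ⟩ has an exact upper bound of pointwise cofinality λ. -/

import Mathlib

open Cardinal Ordinal

/-- `u <* v`: eventual strict domination on `ℕ → ℕ`. -/
def ltStarN (u v : ℕ → ℕ) : Prop := {n | v n ≤ u n}.Finite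

/-- The dominating number 𝔡. -/
noncomputable def dominatingNumber : Cardinal.{0} :=
  sInf {c | ∃ F : Set (ℕ → ℕ), #F = c ∧ ∀ g : ℕ → ℕ, ∃ f ∈ F, ltStarN g f}

/-- mod-finite domination on a set `S ⊆ ℕ`. -/
def ltStarOn (S : Set ℕ) (u v : ℕ → Ordinal) : Prop := {i | i ∈ S ∧ ¬ u i < v i}.Finite

/-!
Exact upper bounds of `⟨f_α ↾ A_n⟩` are unique modulo finite sets, so those on the `A_n` glue to
one function `G` on `A` which is an exact upper bound on every `A_n`. Fix for every `i` a cofinal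
monotone sequence `γ_i : λ → G(i)`. For `δ < λ` choose `β(δ) < λ` with `γ(δ) <* f_β(δ)` on every
`A_n` (a countable supremum), and let `b_δ(n)` bound the finitely many points of `A_n` where
`f_δ <* G` or `γ(δ) <* f_β(δ)` fails. As `𝔡 < λ = cf λ`, a single `t` dominates `b_δ` for
cofinally many `δ`, and then on `B = {i | ∃ n, i ∈ A_n ∧ t(n) < i}` both inequalities hold mod
finite for those `δ`: only the finitely many `n` with `t(n) ≤ b_δ(n)` contribute failures. The
first inequality makes `G` an upper bound on `B`, the second makes it exact.
-/

theorem ltStarOn.mono {S T : Set ℕ} {u v : ℕ → Ordinal} (h : ltStarOn S u v) (hTS : T ⊆ S) :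
    ltStarOn T u v :=
  h.subset fun _ hi => ⟨hTS hi.1, hi.2⟩

theorem ltStarOn.trans {S : Set ℕ} {u v w : ℕ → Ordinal} (huv : ltStarOn S u v)
    (hvw : ltStarOn S v w) : ltStarOn S u w :=
  (huv.union hvw).subset fun i ⟨hi, huw⟩ => by
    by_cases h : u i < v i
    · exact Or.inr ⟨hi, fun hvw => huw (h.trans hvw)⟩
    · exact Or.inl ⟨hi, h⟩

theorem ltStarOn_of_forall_lt {S : Set ℕ} {u v : ℕ → Ordinal} (h : ∀ i ∈ S, u i < v i) :
    ltStarOn S u v :=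
  Set.finite_empty.subset fun i hi => hi.2 (h i hi.1)

def EqStarOn (S : Set ℕ) (u v : ℕ → Ordinal) : Prop := {i | i ∈ S ∧ u i ≠ v i}.Finite

theorem EqStarOn.symm {S : Set ℕ} {u v : ℕ → Ordinal} (h : EqStarOn S u v) : EqStarOn S v u := by
  simpa only [EqStarOn, ne_comm] using h

theorem ltStarOn.of_eqStarOn_right {S : Set ℕ} {u v w : ℕ → Ordinal} (huv : ltStarOn S u v)
    (hvw : EqStarOn S v w) : ltStarOn S u w :=
  (huv.union hvw).subset fun i ⟨hi, huw⟩ => by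
    by_cases h : v i = w i
    · exact Or.inl ⟨hi, h ▸ huw⟩
    · exact Or.inr ⟨hi, h⟩

structure IsExactUpperBoundOn (S : Set ℕ) (κ : Ordinal) (f : Ordinal → ℕ → Ordinal)
    (g : ℕ → Ordinal) : Prop where
  upperBound : ∀ α < κ, ltStarOn S (f α) g
  exact : ∀ u, ltStarOn S u g → ∃ α < κ, ltStarOn S u (f α)

namespace IsExactUpperBoundOn

variable {S T : Set ℕ} {κ : Ordinal} {f : Ordinal → ℕ → Ordinal} {g g' : ℕ → Ordinal}

theorem of_eqStarOn (hg : IsExactUpperBoundOn S κ f g) (hgg' : EqStarOn S g g') :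
    IsExactUpperBoundOn S κ f g' where
  upperBound α hα := (hg.upperBound α hα).of_eqStarOn_right hgg'
  exact u hu := hg.exact u (hu.of_eqStarOn_right hgg'.symm)

theorem finite_lt_of_upperBound (hg : IsExactUpperBoundOn T κ f g) (hpos : ∀ i ∈ T, 0 < g i)
    (hST : S ⊆ T) (hg' : ∀ α < κ, ltStarOn S (f α) g') : {i | i ∈ S ∧ g' i < g i}.Finite := by
  classical
  set u : ℕ → Ordinal := fun i => if i ∈ S ∧ g' i < g i then g' i else 0 with hu
  have hug : ltStarOn T u g := ltStarOn_of_forall_lt fun i hi => by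
    by_cases h : i ∈ S ∧ g' i < g i
    · simpa only [hu, if_pos h] using h.2
    · simpa only [hu, if_neg h] using hpos i hi
  obtain ⟨α, hα, huf⟩ := hg.exact u hug
  refine ((huf.mono hST).trans (hg' α hα)).subset fun i ⟨hi, hlt⟩ => ⟨hi, ?_⟩
  simp only [hu, if_pos (And.intro hi hlt), lt_irrefl, not_false_eq_true]

theorem eqStarOn (hg : IsExactUpperBoundOn S κ f g) (hg' : IsExactUpperBoundOn T κ f g')
    (hST : S ⊆ T) (hpos : ∀ i ∈ S, 0 < g i) (hpos' : ∀ i ∈ T, 0 < g' i) :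
    EqStarOn S g g' := by
  have hlt := hg.finite_lt_of_upperBound hpos subset_rfl fun α hα => (hg'.upperBound α hα).mono hST
  have hgt := hg'.finite_lt_of_upperBound hpos' hST hg.upperBound
  refine (hlt.union hgt).subset fun i ⟨hi, hne⟩ => ?_
  rcases hne.lt_or_gt with h | h
  · exact Or.inr ⟨hi, h⟩
  · exact Or.inl ⟨hi, h⟩

end IsExactUpperBoundOn

section Glue

open Classical in
noncomputable def glue (A : ℕ → Set ℕ) (g : ℕ → ℕ → Ordinal) (i : ℕ) : Ordinal :=
  if h : ∃ n, i ∈ A n then g (Nat.find h) i else 0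

variable {A : ℕ → Set ℕ} {g : ℕ → ℕ → Ordinal}

theorem exists_glue_eq {n i : ℕ} (hi : i ∈ A n) : ∃ m ≤ n, i ∈ A m ∧ glue A g i = g m i := by
  classical
  have h : ∃ n, i ∈ A n := ⟨n, hi⟩
  exact ⟨Nat.find h, Nat.find_le hi, Nat.find_spec h, by simp only [glue, dif_pos h]⟩

theorem eqStarOn_glue (hg : ∀ m n, m ≤ n → EqStarOn (A m) (g m) (g n)) (n : ℕ) :
    EqStarOn (A n) (glue A g) (g n) := by
  refine ((Set.finite_Iic n).biUnion fun m hm => hg m n hm).subset fun i ⟨hi, hne⟩ => ?_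
  obtain ⟨m, hmn, him, heq⟩ := exists_glue_eq (g := g) hi
  exact Set.mem_biUnion hmn ⟨him, heq ▸ hne⟩

end Glue

theorem exists_monotoneOn_cofinal {o κ : Ordinal} (ho : o.cof.ord = κ) :
    ∃ γ : Ordinal → Ordinal, MonotoneOn γ (Set.Iio κ) ∧ (∀ ξ < κ, γ ξ < o) ∧
      ∀ v < o, ∃ ξ < κ, v ≤ γ ξ := by
  classical
  obtain ⟨e, he⟩ := exists_isFundamentalSeq ho
  refine ⟨fun ξ => if h : ξ < κ then e ⟨ξ, h⟩ else 0, ?_, ?_, ?_⟩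
  · intro ξ hξ ζ hζ hle
    simp only [dif_pos (Set.mem_Iio.1 hξ), dif_pos (Set.mem_Iio.1 hζ)]
    exact he.strictMono.monotone (Subtype.mk_le_mk.2 hle)
  · intro ξ hξ
    simp only [dif_pos hξ]
    exact (e ⟨ξ, hξ⟩).2
  · intro v hv
    obtain ⟨_, ⟨⟨ξ, hξ⟩, rfl⟩, hle⟩ := he.isCofinal_range ⟨v, hv⟩
    exact ⟨ξ, hξ, by simp only [dif_pos (Set.mem_Iio.1 hξ)]; exact hle⟩

theorem exists_forall_ltStarOn {κ : Ordinal.{0}} (hκ : ℵ₀ < κ.cof) {S : ℕ → Set ℕ}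
    {f : Ordinal → ℕ → Ordinal}
    (hf : ∀ α < κ, ∀ β < κ, α < β → ltStarOn (⋃ n, S n) (f α) (f β)) {u : ℕ → Ordinal}
    (hu : ∀ n, ∃ β < κ, ltStarOn (S n) u (f β)) : ∃ β < κ, ∀ n, ltStarOn (S n) u (f β) := by
  choose β hβκ hβ using hu
  have hlim : Order.IsSuccLimit κ := one_lt_cof_iff.1 (one_lt_aleph0.trans hκ)
  have hsup : ⨆ n, Order.succ (β n) < κ :=
    iSup_lt_of_lt_cof (by rwa [mk_nat]) fun n => hlim.succ_lt (hβκ n)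
  refine ⟨_, hsup, fun n => (hβ n).trans ((hf _ (hβκ n) _ hsup ?_).mono (Set.subset_iUnion S n))⟩
  exact (Order.lt_succ _).trans_le (Ordinal.le_iSup (fun n => Order.succ (β n)) n)

theorem exists_dominating_family :
    ∃ F : Set (ℕ → ℕ), #F = dominatingNumber ∧ ∀ u, ∃ v ∈ F, ltStarN u v := by
  refine csInf_mem (s := {c | ∃ F : Set (ℕ → ℕ), #F = c ∧ ∀ u, ∃ v ∈ F, ltStarN u v})
    ⟨_, Set.univ, rfl, fun u => ⟨fun n => u n + 1, Set.mem_univ _, ?_⟩⟩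
  simp [ltStarN]

theorem exists_ltStarN_cofinal {κ : Ordinal.{0}} (hκ : dominatingNumber < κ.cof)
    (b : Ordinal → ℕ → ℕ) : ∃ t, ∀ c < κ, ∃ δ, c ≤ δ ∧ δ < κ ∧ ltStarN (b δ) t := by
  obtain ⟨F, hF, hdom⟩ := exists_dominating_family
  by_contra! h
  choose c hcκ hc using fun t : F => h t
  have hsup : ⨆ t, c t < κ := iSup_lt_of_lt_cof (hF ▸ hκ) hcκ
  obtain ⟨t, htF, ht⟩ := hdom (b (⨆ t, c t))
  exact hc ⟨t, htF⟩ _ (Ordinal.le_iSup c ⟨t, htF⟩) hsup ht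

def tailUnion (S : ℕ → Set ℕ) (t : ℕ → ℕ) : Set ℕ := {i | ∃ n, i ∈ S n ∧ t n < i}

theorem tailUnion_subset_iUnion (S : ℕ → Set ℕ) (t : ℕ → ℕ) : tailUnion S t ⊆ ⋃ n, S n :=
  fun _ ⟨n, hn, _⟩ => Set.mem_iUnion.2 ⟨n, hn⟩

theorem finite_diff_tailUnion (S : ℕ → Set ℕ) (t : ℕ → ℕ) (n : ℕ) :
    (S n \ tailUnion S t).Finite :=
  (Set.finite_Iic (t n)).subset fun _ ⟨hi, hiB⟩ => not_lt.1 fun hlt => hiB ⟨n, hi, hlt⟩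

theorem exists_ltStarN_finite_tailUnion {S : ℕ → Set ℕ} {P : ℕ → Prop}
    (hP : ∀ n, {i | i ∈ S n ∧ ¬ P i}.Finite) :
    ∃ b : ℕ → ℕ, ∀ t, ltStarN b t → {i | i ∈ tailUnion S t ∧ ¬ P i}.Finite := by
  choose b hb using fun n => (hP n).bddAbove
  refine ⟨b, fun t ht => ?_⟩
  obtain ⟨N, hN⟩ := ht.bddAbove
  refine ((Set.finite_Iic N).biUnion fun n _ => hP n).subset fun i ⟨⟨n, hi, hti⟩, hPi⟩ => ?_
  have hn : n ≤ N := hN (not_lt.1 fun hbt => (hb n ⟨hi, hPi⟩).not_gt (hbt.trans hti))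
  exact Set.mem_biUnion hn ⟨hi, hPi⟩

theorem exists_ltStarN_ltStarOn_tailUnion {κ : Ordinal.{0}} (hκ : ℵ₀ < κ.cof)
    {S : ℕ → Set ℕ} {f : Ordinal → ℕ → Ordinal}
    (hf : ∀ α < κ, ∀ β < κ, α < β → ltStarOn (⋃ n, S n) (f α) (f β))
    {G : ℕ → Ordinal} (hG : ∀ n, IsExactUpperBoundOn (S n) κ f G) {δ : Ordinal} (hδ : δ < κ)
    {v : ℕ → Ordinal} (hv : ∀ n, ltStarOn (S n) v G) :
    ∃ β < κ, ∃ b : ℕ → ℕ, ∀ t, ltStarN b t →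
      ltStarOn (tailUnion S t) (f δ) G ∧ ltStarOn (tailUnion S t) v (f β) := by
  obtain ⟨β, hβ, hvβ⟩ := exists_forall_ltStarOn hκ hf fun n => (hG n).exact v (hv n)
  obtain ⟨b, hb⟩ := exists_ltStarN_finite_tailUnion (S := S)
    (P := fun i => f δ i < G i ∧ v i < f β i) fun n =>
      (((hG n).upperBound δ hδ).union (hvβ n)).subset fun i ⟨hi, h⟩ => by
        rw [not_and_or] at h
        exact h.imp (And.intro hi) (And.intro hi)
  exact ⟨β, hβ, b, fun t ht => ⟨(hb t ht).subset fun i ⟨hi, h⟩ => ⟨hi, fun hP => h hP.1⟩,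
    (hb t ht).subset fun i ⟨hi, h⟩ => ⟨hi, fun hP => h hP.2⟩⟩⟩

theorem exists_tailUnion_isExactUpperBoundOn {lam : Cardinal.{0}} (hreg : lam.IsRegular)
    (hunc : ℵ₀ < lam) (hd : dominatingNumber < lam) {S : ℕ → Set ℕ}
    {f : Ordinal → ℕ → Ordinal}
    (hf : ∀ α < lam.ord, ∀ β < lam.ord, α < β → ltStarOn (⋃ n, S n) (f α) (f β))
    {G : ℕ → Ordinal} (hG : ∀ n, IsExactUpperBoundOn (S n) lam.ord f G)
    (hcof : ∀ i ∈ ⋃ n, S n, (G i).cof = lam) :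
    ∃ t, IsExactUpperBoundOn (tailUnion S t) lam.ord f G := by
  have hlim : Order.IsSuccLimit lam.ord := isSuccLimit_ord hreg.aleph0_le
  choose! γ hγmono hγlt hγcof using fun i hi => exists_monotoneOn_cofinal (κ := lam.ord)
    (congrArg Cardinal.ord (hcof i hi))
  choose! β hβ b hb using fun δ (hδ : δ < lam.ord) =>
    exists_ltStarN_ltStarOn_tailUnion (by rwa [hreg.cof_ord]) hf hG hδ fun n =>
      ltStarOn_of_forall_lt fun i hi => hγlt i (Set.mem_iUnion.2 ⟨n, hi⟩) δ hδ
  obtain ⟨t, ht⟩ := exists_ltStarN_cofinal (by rwa [hreg.cof_ord]) b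
  have hB := tailUnion_subset_iUnion S t
  refine ⟨t, fun α hα => ?_, fun u hu => ?_⟩
  · obtain ⟨δ, hαδ, hδ, hbt⟩ := ht _ (hlim.succ_lt hα)
    exact ((hf α hα δ hδ (Order.succ_le_iff.1 hαδ)).mono hB).trans (hb δ hδ t hbt).1
  · have hξ : ∀ i, ∃ ξ < lam.ord, i ∈ tailUnion S t → u i < G i → u i ≤ γ i ξ := fun i => by
      by_cases h : i ∈ tailUnion S t ∧ u i < G i
      · obtain ⟨ξ, hξ, hle⟩ := hγcof i (hB h.1) _ h.2
        exact ⟨ξ, hξ, fun _ _ => hle⟩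
      · exact ⟨0, hreg.ord_pos, fun hi hu => (h ⟨hi, hu⟩).elim⟩
    choose ξ hξlt hξ using hξ
    have hsup : ⨆ i, ξ i < lam.ord := iSup_lt_of_lt_cof (by rwa [mk_nat, hreg.cof_ord]) hξlt
    obtain ⟨δ, hξδ, hδ, hbt⟩ := ht _ hsup
    refine ⟨β δ, hβ δ hδ, (hu.union (hb δ hδ t hbt).2).subset fun i ⟨hi, hle⟩ => ?_⟩
    by_cases hui : u i < G i
    · refine Or.inr ⟨hi, fun hγ => hle ?_⟩
      calc u i ≤ γ i (ξ i) := hξ i hi hui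
        _ ≤ γ i δ := hγmono i (hB hi) (hξlt i) hδ ((Ordinal.le_iSup ξ i).trans hξδ)
        _ < f (β δ) i := hγ
    · exact Or.inl ⟨hi, hui⟩

theorem stmt_7_general (lam : Cardinal.{0}) (hreg : lam.IsRegular) (hunc : ℵ₀ < lam)
    (hlt : dominatingNumber < lam)
    (A : ℕ → Set ℕ) (hmono : ∀ n, A n ⊆ A (n + 1))
    (f : Ordinal → ℕ → Ordinal)
    (hf : ∀ α < lam.ord, ∀ β < lam.ord, α < β → ltStarOn (⋃ n, A n) (f α) (f β))
    (g : ℕ → ℕ → Ordinal)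
    (hub : ∀ n, ∀ α < lam.ord, ltStarOn (A n) (f α) (g n))
    (hexact : ∀ n, ∀ u : ℕ → Ordinal, ltStarOn (A n) u (g n) →
      ∃ α < lam.ord, ltStarOn (A n) u (f α))
    (hcof : ∀ n, ∀ i ∈ A n, (g n i).cof = lam) :
    ∃ B ⊆ ⋃ n, A n, (∀ n, (A n \ B).Finite) ∧
      ∃ gB : ℕ → Ordinal, (∀ i ∈ B, (gB i).cof = lam) ∧
        (∀ α < lam.ord, ltStarOn B (f α) gB) ∧
        (∀ u : ℕ → Ordinal, ltStarOn B u gB → ∃ α < lam.ord, ltStarOn B u (f α)) := by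
  have hA : Monotone A := monotone_nat_of_le_succ hmono
  have hpos : ∀ n, ∀ i ∈ A n, 0 < g n i := fun n i hi =>
    pos_iff_ne_zero.2 fun h0 => hreg.pos.ne' (by rw [← hcof n i hi, h0, cof_zero])
  have hg : ∀ n, IsExactUpperBoundOn (A n) lam.ord f (g n) := fun n => ⟨hub n, hexact n⟩
  have hG : ∀ n, IsExactUpperBoundOn (A n) lam.ord f (glue A g) := fun n =>
    (hg n).of_eqStarOn (eqStarOn_glue (fun m n hmn =>
      (hg m).eqStarOn (hg n) (hA hmn) (hpos m) (hpos n)) n).symm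
  have hcofG : ∀ i ∈ ⋃ n, A n, (glue A g i).cof = lam := fun i hi => by
    obtain ⟨n, hn⟩ := Set.mem_iUnion.1 hi
    obtain ⟨m, -, hm, heq⟩ := exists_glue_eq (g := g) hn
    rw [heq, hcof m i hm]
  obtain ⟨t, ht⟩ := exists_tailUnion_isExactUpperBoundOn hreg hunc hlt hf hG hcofG
  exact ⟨_, tailUnion_subset_iUnion A t, finite_diff_tailUnion A t, glue A g,
    fun i hi => hcofG i (tailUnion_subset_iUnion A t hi), ht.upperBound, ht.exact⟩

/-- for regular uncountable λ > 𝔡, if each ⟨f_α ↾ A_n⟩ has an exact upper bound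
of pointwise cofinality λ, then there is B ⊆ A = ⋃ A_n with A_n ⊆* B for all n such that
⟨f_α ↾ B⟩ has an exact upper bound of pointwise cofinality λ. -/
theorem stmt_7 (lam : Cardinal.{0}) (hreg : lam.IsRegular) (hunc : ℵ₀ < lam)
    (hlt : dominatingNumber < lam)
    (A : ℕ → Set ℕ) (hmono : ∀ n, A n ⊆ A (n + 1)) (hinf : ∀ n, (A n).Infinite)
    (f : Ordinal → ℕ → Ordinal)
    (hf : ∀ α < lam.ord, ∀ β < lam.ord, α < β → ltStarOn (⋃ n, A n) (f α) (f β))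
    (g : ℕ → ℕ → Ordinal)
    (hub : ∀ n, ∀ α < lam.ord, ltStarOn (A n) (f α) (g n))
    (hexact : ∀ n, ∀ u : ℕ → Ordinal, ltStarOn (A n) u (g n) →
      ∃ α < lam.ord, ltStarOn (A n) u (f α))
    (hcof : ∀ n, ∀ i ∈ A n, (g n i).cof = lam) :
    ∃ B ⊆ ⋃ n, A n, (∀ n, (A n \ B).Finite) ∧
      ∃ gB : ℕ → Ordinal, (∀ i ∈ B, (gB i).cof = lam) ∧
        (∀ α < lam.ord, ltStarOn B (f α) gB) ∧
        (∀ u : ℕ → Ordinal, ltStarOn B u gB → ∃ α < lam.ord, ltStarOn B u (f α)) :=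
  stmt_7_general lam hreg hunc hlt A hmono f hf g hub hexact hcof
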